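/- Let W ⊆ R^d and V ⊆ R^r be subspaces, and decompose U ∈ R^{d×r} as U = U_A + U_B where the columns of U_A lie in W and the columns of U_B lie in W^⊥. Decompose w = w_A + w_B with w_A ∈ W, w_B ∈ W^⊥, and v = v₁ + v₂ with v₁ ∈ V, v₂ ∈ V^⊥. If the rows of U_A lie in V, the rows of U_B lie in V^⊥, and U_B = w_B x^T + U₂ with w_B orthogonal to every column of U₂, then ‖Uv − w‖² = ‖U_A v₁ − w_A‖² + ‖w_B‖²·(x^T v₂ − 1)² + ‖U₂ v₂‖². -/

import Mathlib

/-! Since the rows of `U_A` lie in `V` and those of `U_B` in `Vᗮ`, `U_A v₂ = 0` and `U_B v₁ = 0`, so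
`Uv - w = (U_A v₁ - w_A) + (U_B v₂ - w_B)` splits into a vector of `W` and one of `Wᗮ`. Moreover
`U_B v₂ - w_B = (xᵀv₂ - 1) w_B + U₂ v₂` with `w_B ⟂ U₂ v₂`, so Pythagoras applies twice. -/

open Matrix

namespace Matrix

variable {m n : Type*} [Fintype n]

lemma dotProduct_eq_zero_of_mem_orthogonal {K : Submodule ℝ (EuclideanSpace ℝ n)} {a b : n → ℝ}
    (ha : WithLp.toLp 2 a ∈ K) (hb : WithLp.toLp 2 b ∈ Kᗮ) : a ⬝ᵥ b = 0 := by
  rw [dotProduct_comm]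
  exact Submodule.inner_right_of_mem_orthogonal ha hb

lemma mulVec_eq_zero_of_row_mem {K : Submodule ℝ (EuclideanSpace ℝ n)} {A : Matrix m n ℝ}
    {v : n → ℝ} (hA : ∀ i, WithLp.toLp 2 (fun j => A i j) ∈ K) (hv : WithLp.toLp 2 v ∈ Kᗮ) :
    A *ᵥ v = 0 :=
  funext fun i => dotProduct_eq_zero_of_mem_orthogonal (hA i) hv

lemma toLp_mulVec_mem_of_col_mem {K : Submodule ℝ (EuclideanSpace ℝ m)} {A : Matrix m n ℝ}
    (hA : ∀ j, WithLp.toLp 2 (fun i => A i j) ∈ K) (v : n → ℝ) :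
    WithLp.toLp 2 (A *ᵥ v) ∈ K := by
  rw [mulVec_eq_sum, WithLp.toLp_sum]
  exact K.sum_mem fun j _ => by
    rw [op_smul_eq_smul, WithLp.toLp_smul]
    exact K.smul_mem _ (hA j)

lemma dotProduct_mulVec_eq_zero_of_dotProduct_col_eq_zero [Fintype m] {R : Type*} [CommSemiring R]
    {w : m → R} {A : Matrix m n R} (h : ∀ j, w ⬝ᵥ (fun i => A i j) = 0) (v : n → R) :
    w ⬝ᵥ A *ᵥ v = 0 := by
  rw [dotProduct_mulVec, show w ᵥ* A = 0 from funext h, zero_dotProduct]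

lemma add_dotProduct_add_of_dotProduct_eq_zero {R : Type*} [CommRing R] {a b : n → R}
    (h : a ⬝ᵥ b = 0) : (a + b) ⬝ᵥ (a + b) = a ⬝ᵥ a + b ⬝ᵥ b := by
  rw [add_dotProduct, dotProduct_add, dotProduct_add, dotProduct_comm b a, h]
  ring

end Matrix

/-- the orthogonal loss decomposition
`‖Uv − w‖² = ‖U_A v₁ − w_A‖² + ‖w_B‖²(xᵀv₂ − 1)² + ‖U₂v₂‖²`. -/
theorem loss_orthogonal_decomposition
    (d r : ℕ)
    (W : Submodule ℝ (EuclideanSpace ℝ (Fin d)))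
    (V : Submodule ℝ (EuclideanSpace ℝ (Fin r)))
    (U UA UB U2 : Matrix (Fin d) (Fin r) ℝ)
    (w wA wB : Fin d → ℝ) (v v1 v2 x : Fin r → ℝ)
    (hU : U = UA + UB)
    (hcolA : ∀ j, WithLp.toLp 2 (fun i => UA i j) ∈ W)
    (hcolB : ∀ j, WithLp.toLp 2 (fun i => UB i j) ∈ Wᗮ)
    (hrowA : ∀ i, WithLp.toLp 2 (fun j => UA i j) ∈ V)
    (hrowB : ∀ i, WithLp.toLp 2 (fun j => UB i j) ∈ Vᗮ)
    (hw : w = wA + wB) (hwA : WithLp.toLp 2 wA ∈ W) (hwB : WithLp.toLp 2 wB ∈ Wᗮ)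
    (hv : v = v1 + v2) (hv1 : WithLp.toLp 2 v1 ∈ V) (hv2 : WithLp.toLp 2 v2 ∈ Vᗮ)
    (hUB : UB = vecMulVec wB x + U2)
    (horth : ∀ j, wB ⬝ᵥ (fun i => U2 i j) = 0) :
    (U.mulVec v - w) ⬝ᵥ (U.mulVec v - w)
      = (UA.mulVec v1 - wA) ⬝ᵥ (UA.mulVec v1 - wA)
        + (wB ⬝ᵥ wB) * (x ⬝ᵥ v2 - 1) ^ 2
        + (U2.mulVec v2) ⬝ᵥ (U2.mulVec v2) := by
  have hUAv2 : UA *ᵥ v2 = 0 := mulVec_eq_zero_of_row_mem hrowA hv2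
  have hUBv1 : UB *ᵥ v1 = 0 := mulVec_eq_zero_of_row_mem hrowB (V.le_orthogonal_orthogonal hv1)
  have hresidual : U *ᵥ v - w = (UA *ᵥ v1 - wA) + (UB *ᵥ v2 - wB) := by
    rw [hU, hw, hv, add_mulVec, mulVec_add, mulVec_add, hUAv2, hUBv1]
    abel
  have hW : (UA *ᵥ v1 - wA) ⬝ᵥ (UB *ᵥ v2 - wB) = 0 := by
    refine dotProduct_eq_zero_of_mem_orthogonal (K := W) ?_ ?_ <;> rw [WithLp.toLp_sub]
    · exact W.sub_mem (toLp_mulVec_mem_of_col_mem hcolA v1) hwA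
    · exact Wᗮ.sub_mem (toLp_mulVec_mem_of_col_mem hcolB v2) hwB
  have hUBv2 : UB *ᵥ v2 - wB = (x ⬝ᵥ v2 - 1) • wB + U2 *ᵥ v2 := by
    rw [hUB, add_mulVec, vecMulVec_mulVec, op_smul_eq_smul]
    module
  have hwBU2 : wB ⬝ᵥ U2 *ᵥ v2 = 0 :=
    dotProduct_mulVec_eq_zero_of_dotProduct_col_eq_zero horth v2
  rw [hresidual, add_dotProduct_add_of_dotProduct_eq_zero hW, hUBv2,
    add_dotProduct_add_of_dotProduct_eq_zero (by rw [smul_dotProduct, hwBU2, smul_zero]),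
    smul_dotProduct, dotProduct_smul, smul_eq_mul, smul_eq_mul]
  ring
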